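/- arXiv:2507.09689 — 2 statements merged into one kernel-verified Lean document; each statement's English description precedes it below -/
import Mathlib

section
/- For every n ≥ 0, the identity l_n^2 - (X^2 - 4)·f_n^2 = 4 holds in ℤ[X]. -/
open Polynomial

/-- Fibonacci-type polynomials: `f 0 = 0`, `f 1 = 1`, `f n = X * f (n-1) - f (n-2)`. -/
noncomputable def fibPoly : ℕ → ℤ[X]
  | 0 => 0
  | 1 => 1
  | (n + 2) => X * fibPoly (n + 1) - fibPoly n

/-- Lucas-type polynomials: `l 0 = 2`, `l 1 = X`, `l n = X * l (n-1) - l (n-2)`. -/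
noncomputable def lucPoly : ℕ → ℤ[X]
  | 0 => 2
  | 1 => X
  | (n + 2) => X * lucPoly (n + 1) - lucPoly n

lemma lucPoly_aux (n : ℕ) :
    (lucPoly n) ^ 2 - (X ^ 2 - 4) * (fibPoly n) ^ 2 = 4 ∧
    (lucPoly (n + 1)) ^ 2 - (X ^ 2 - 4) * (fibPoly (n + 1)) ^ 2 = 4 ∧
    lucPoly n * lucPoly (n + 1) - (X ^ 2 - 4) * (fibPoly n * fibPoly (n + 1)) = 2 * X := by
  induction n with
  | zero =>
    refine ⟨?_, ?_, ?_⟩ <;> simp [fibPoly, lucPoly] <;> ring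
  | succ n ih =>
    obtain ⟨h1, h2, h3⟩ := ih
    have hf : fibPoly (n + 2) = X * fibPoly (n + 1) - fibPoly n := by simp [fibPoly]
    have hl : lucPoly (n + 2) = X * lucPoly (n + 1) - lucPoly n := by simp [lucPoly]
    refine ⟨h2, ?_, ?_⟩
    · rw [hf, hl]
      have : (X * lucPoly (n + 1) - lucPoly n) ^ 2 -
          (X ^ 2 - 4) * (X * fibPoly (n + 1) - fibPoly n) ^ 2 =
          X ^ 2 * ((lucPoly (n + 1)) ^ 2 - (X ^ 2 - 4) * (fibPoly (n + 1)) ^ 2) -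
          2 * X * (lucPoly n * lucPoly (n + 1) - (X ^ 2 - 4) * (fibPoly n * fibPoly (n + 1))) +
          ((lucPoly n) ^ 2 - (X ^ 2 - 4) * (fibPoly n) ^ 2) := by ring
      rw [this, h1, h2, h3]; ring
    · rw [hf, hl]
      have : lucPoly (n + 1) * (X * lucPoly (n + 1) - lucPoly n) -
          (X ^ 2 - 4) * (fibPoly (n + 1) * (X * fibPoly (n + 1) - fibPoly n)) =
          X * ((lucPoly (n + 1)) ^ 2 - (X ^ 2 - 4) * (fibPoly (n + 1)) ^ 2) -
          (lucPoly n * lucPoly (n + 1) - (X ^ 2 - 4) * (fibPoly n * fibPoly (n + 1))) := by ring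
      rw [this, h2, h3]; ring

theorem lucPoly_sq_sub (n : ℕ) :
    (lucPoly n) ^ 2 - (X ^ 2 - 4) * (fibPoly n) ^ 2 = 4 := by
  exact (lucPoly_aux n).1
end

section
/- For every n ≥ 0, the identities (Z (2n+1)).comp (X^2) = (l (2n+1))^2 and (Z (2n)).comp (X^2) = (4 − X^2) · (f (2n))^2 hold in ℤ[X]; equivalently, Z_{2n+1}(x) = l_{2n+1}(√x)^2 and Z_{2n}(x) = (4 − x)·f_{2n}(√x)^2 after substituting x = t^2. -/
open Polynomial

/-- Herbig's variant of the spread polynomials: `Z n = 2 - lₙ(2 - X)`. -/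
noncomputable def Zpoly (n : ℕ) : ℤ[X] := 2 - (lucPoly n).comp (2 - X)

lemma luc_rec (n : ℕ) : lucPoly (n + 2) = X * lucPoly (n + 1) - lucPoly n := rfl
lemma fib_rec (n : ℕ) : fibPoly (n + 2) = X * fibPoly (n + 1) - fibPoly n := rfl

lemma luc_add4 (k : ℕ) :
    lucPoly (k + 4) = (X ^ 2 - 2) * lucPoly (k + 2) - lucPoly k := by
  linear_combination luc_rec (k + 2) + X * luc_rec (k + 1) + luc_rec k

/-- `lₘ(2 - X²) = (-1)^m · l_{2m}` -/
lemma luc_comp (m : ℕ) :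
    (lucPoly m).comp (2 - X ^ 2) = (-1) ^ m * lucPoly (2 * m) := by
  induction m using Nat.twoStepInduction with
  | zero => simp [lucPoly]
  | one =>
      show (X : ℤ[X]).comp (2 - X ^ 2) = (-1) ^ 1 * lucPoly 2
      rw [luc_rec 0]
      simp [lucPoly]
      ring
  | more m ih1 ih2 =>
      rw [luc_rec m, sub_comp, mul_comp, X_comp, ih1, ih2]
      have h4 : 2 * (m + 2) = 2 * m + 4 := by ring
      have h2 : 2 * (m + 1) = 2 * m + 2 := by ring
      rw [h4, h2, luc_add4 (2 * m)]
      ring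

lemma luc_sq (m : ℕ) :
    lucPoly m ^ 2 = lucPoly (2 * m) + 2 ∧
    lucPoly m * lucPoly (m + 1) = lucPoly (2 * m + 1) + X ∧
    lucPoly (m + 1) ^ 2 = lucPoly (2 * m + 2) + 2 := by
  induction m with
  | zero =>
      refine ⟨by simp [lucPoly]; ring, ?_, ?_⟩
      · show (2 : ℤ[X]) * X = lucPoly 1 + X
        simp [lucPoly]; ring
      · rw [luc_rec 0]; simp [lucPoly]; ring
  | succ m ih =>
      obtain ⟨h1, h2, h3⟩ := ih
      have e1 : 2 * (m + 1) = 2 * m + 2 := by ring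
      have e2 : 2 * (m + 1) + 1 = 2 * m + 3 := by ring
      have e3 : 2 * (m + 1) + 2 = 2 * m + 4 := by ring
      refine ⟨by rw [e1]; exact h3, ?_, ?_⟩
      · rw [e2]
        linear_combination lucPoly (m + 1) * luc_rec m + X * h3 - h2 -
          luc_rec (2 * m + 1)
      · rw [e3, luc_rec m, luc_add4 (2 * m)]
        linear_combination X ^ 2 * h3 - 2 * X * h2 + h1 + 2 * luc_rec (2 * m)

lemma fib_sq (m : ℕ) :
    (4 - X ^ 2) * fibPoly m ^ 2 = 2 - lucPoly (2 * m) ∧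
    (4 - X ^ 2) * (fibPoly m * fibPoly (m + 1)) = X - lucPoly (2 * m + 1) ∧
    (4 - X ^ 2) * fibPoly (m + 1) ^ 2 = 2 - lucPoly (2 * m + 2) := by
  induction m with
  | zero =>
      refine ⟨by simp [fibPoly, lucPoly], by simp [fibPoly, lucPoly], ?_⟩
      rw [luc_rec 0]; simp [fibPoly, lucPoly]; ring
  | succ m ih =>
      obtain ⟨h1, h2, h3⟩ := ih
      have e1 : 2 * (m + 1) = 2 * m + 2 := by ring
      have e2 : 2 * (m + 1) + 1 = 2 * m + 3 := by ring
      have e3 : 2 * (m + 1) + 2 = 2 * m + 4 := by ring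
      refine ⟨by rw [e1]; exact h3, ?_, ?_⟩
      · rw [e2]
        linear_combination (4 - X ^ 2) * fibPoly (m + 1) * fib_rec m + X * h3 -
          h2 + luc_rec (2 * m + 1)
      · rw [e3, fib_rec m, luc_add4 (2 * m)]
        linear_combination X ^ 2 * h3 - 2 * X * h2 + h1 - 2 * luc_rec (2 * m)

theorem Zpoly_comp_sq (n : ℕ) :
    (Zpoly (2 * n + 1)).comp (X ^ 2) = (lucPoly (2 * n + 1)) ^ 2 ∧
    (Zpoly (2 * n)).comp (X ^ 2) = (4 - X ^ 2) * (fibPoly (2 * n)) ^ 2 := by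
  have key : ∀ m : ℕ, (Zpoly m).comp (X ^ 2) = 2 - (-1) ^ m * lucPoly (2 * m) := by
    intro m
    rw [Zpoly, sub_comp, comp_assoc, ← luc_comp m]
    simp
  constructor
  · rw [key]
    have hs : (-1 : ℤ[X]) ^ (2 * n + 1) = -1 := by
      rw [pow_succ, pow_mul]; simp
    rw [hs]
    linear_combination -(luc_sq (2 * n + 1)).1
  · rw [key]
    have hs : (-1 : ℤ[X]) ^ (2 * n) = 1 := by
      rw [pow_mul]; simp
    rw [hs]
    linear_combination -(fib_sq (2 * n)).1
end
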